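/- Let α = α_{(z,χ)} : ℤ ⋉ H → GL(n,ℂ) where χ : H → ℂ* is a character such that the characters χ, t·χ, …, t^{n−1}·χ are pairwise distinct (here (t^i·χ)(h) := χ(t^i·h)). Then α is irreducible: the only subspaces of ℂ^n invariant under the image of α are 0 and ℂ^n. -/

import Mathlib

/-!
The diagonal matrices `D h` act on the standard basis through the characters `tⁱ·χ`. Since these
are pairwise distinct, applying `D h - χ(tʲ h)` for suitable `h` kills the `j`-th coordinate of a
vector while keeping the others up to nonzero factors, so a nonzero invariant subspace contains a
standard basis vector. The matrix `U` maps each basis vector to a nonzero multiple of the next one,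
cyclically, so the subspace then contains the whole standard basis.
-/

open Matrix

section

variable {ι K : Type*} [Fintype ι] [DecidableEq ι] [Field K]

namespace Submodule

theorem exists_mem_apply_ne_zero_of_diagonal_invariant {H : Type*} {d : H → ι → K}
    (hsep : ∀ i j, i ≠ j → ∃ h, d h i ≠ d h j) {V : Submodule K (ι → K)}
    (hV : ∀ h, ∀ v ∈ V, diagonal (d h) *ᵥ v ∈ V) {v : ι → K} (hv : v ∈ V) {i : ι}
    (hvi : v i ≠ 0) (s : Finset ι) (his : i ∉ s) :
    ∃ w ∈ V, (∀ j ∈ s, w j = 0) ∧ w i ≠ 0 := by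
  induction s using Finset.induction_on with
  | empty => exact ⟨v, hv, by simp, hvi⟩
  | @insert j s _ ih =>
    obtain ⟨w, hwV, hws, hwi⟩ := ih (fun h ↦ his (Finset.mem_insert_of_mem h))
    obtain ⟨h, hij⟩ := hsep i j fun e ↦ his (e ▸ Finset.mem_insert_self i s)
    -- `diagonal (d h) - d h j` kills the `j`-th coordinate and rescales the others
    have hw' : ∀ k, (diagonal (d h) *ᵥ w - d h j • w) k = (d h k - d h j) * w k := by
      intro k
      simp only [Pi.sub_apply, Pi.smul_apply, smul_eq_mul, mulVec_diagonal]
      ring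
    refine ⟨diagonal (d h) *ᵥ w - d h j • w, V.sub_mem (hV h w hwV) (V.smul_mem _ hwV), ?_, ?_⟩
    · simp only [Finset.forall_mem_insert, hw', sub_self, zero_mul, true_and]
      exact fun k hk ↦ by rw [hws k hk, mul_zero]
    · rw [hw']
      exact mul_ne_zero (sub_ne_zero.mpr hij) hwi

theorem single_mem_of_diagonal_invariant {H : Type*} {d : H → ι → K}
    (hsep : ∀ i j, i ≠ j → ∃ h, d h i ≠ d h j) {V : Submodule K (ι → K)}
    (hV : ∀ h, ∀ v ∈ V, diagonal (d h) *ᵥ v ∈ V) {v : ι → K} (hv : v ∈ V) {i : ι}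
    (hvi : v i ≠ 0) : Pi.single i 1 ∈ V := by
  obtain ⟨w, hwV, hw, hwi⟩ := exists_mem_apply_ne_zero_of_diagonal_invariant hsep hV hv hvi
    (Finset.univ.erase i) (Finset.notMem_erase i _)
  have hw_eq : w = w i • Pi.single i 1 := by
    ext k
    rcases eq_or_ne k i with rfl | hki
    · simp
    · simp [hki, hw k (Finset.mem_erase.mpr ⟨hki, Finset.mem_univ k⟩)]
  rw [hw_eq] at hwV
  simpa [hwi] using V.smul_mem (w i)⁻¹ hwV

theorem single_iterate_mem_of_mulVec_single {A : Matrix ι ι K} {σ : ι → ι}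
    (hA : ∀ i, ∃ c : K, c ≠ 0 ∧ A *ᵥ Pi.single i 1 = c • Pi.single (σ i) 1)
    {V : Submodule K (ι → K)} (hV : ∀ v ∈ V, A *ᵥ v ∈ V) {i : ι} (hi : Pi.single i 1 ∈ V) (k : ℕ) :
    Pi.single (σ^[k] i) 1 ∈ V := by
  induction k with
  | zero => exact hi
  | succ k ih =>
    obtain ⟨c, hc, hAc⟩ := hA (σ^[k] i)
    have := V.smul_mem c⁻¹ (hV _ ih)
    rwa [hAc, smul_smul, inv_mul_cancel₀ hc, one_smul, ← Function.iterate_succ_apply' σ] at this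

theorem eq_top_of_forall_single_mem {V : Submodule K (ι → K)} (hV : ∀ i, Pi.single i 1 ∈ V) :
    V = ⊤ := by
  rw [eq_top_iff, ← (Pi.basisFun K ι).span_eq, span_le]
  rintro _ ⟨i, rfl⟩
  simpa using hV i

theorem eq_bot_or_eq_top_of_diagonal_of_monomial_invariant {H : Type*} {d : H → ι → K}
    (hsep : ∀ i j, i ≠ j → ∃ h, d h i ≠ d h j) {A : Matrix ι ι K} {σ : ι → ι}
    (hA : ∀ i, ∃ c : K, c ≠ 0 ∧ A *ᵥ Pi.single i 1 = c • Pi.single (σ i) 1)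
    (hσ : ∀ i j, ∃ k, σ^[k] i = j) {V : Submodule K (ι → K)}
    (hVd : ∀ h, ∀ v ∈ V, diagonal (d h) *ᵥ v ∈ V) (hVA : ∀ v ∈ V, A *ᵥ v ∈ V) :
    V = ⊥ ∨ V = ⊤ := by
  refine or_iff_not_imp_left.mpr fun hV ↦ ?_
  obtain ⟨v, hv, hv0⟩ := exists_mem_ne_zero_of_ne_bot hV
  obtain ⟨i, hvi⟩ := Function.ne_iff.mp hv0
  have hi := single_mem_of_diagonal_invariant hsep hVd hv hvi
  refine eq_top_of_forall_single_mem fun j ↦ ?_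
  obtain ⟨k, rfl⟩ := hσ i j
  exact single_iterate_mem_of_mulVec_single hA hVA hi k

end Submodule

theorem exists_finRotate_iterate_eq {n : ℕ} (i j : Fin n) : ∃ k, (finRotate n)^[k] i = j :=
  ⟨(j - i : Fin n).val, by
    have := i.neZero
    rw [← finCycle_eq_finRotate_iterate, finCycle_apply, add_sub_cancel]⟩

/-- The matrix `T` of `α(j, h) = Tʲ · diag(χ(h), …, χ(tⁿ⁻¹h))`. -/
def twistedShift (n : ℕ) (z : K) : Matrix (Fin n) (Fin n) K :=
  of fun i j ↦ if (i : ℕ) = j + 1 then 1 else if (i : ℕ) = 0 ∧ (j : ℕ) = n - 1 then z else 0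

theorem twistedShift_mulVec_single {n : ℕ} (z : K) (i : Fin n) :
    twistedShift n z *ᵥ Pi.single i 1
      = (if (i : ℕ) = n - 1 then z else 1) • Pi.single (finRotate n i) 1 := by
  obtain ⟨n, rfl⟩ : ∃ m, n = m + 1 := ⟨n - 1, by have := i.pos; omega⟩
  ext a
  rw [mulVec_single_one, finRotate_apply]
  simp only [twistedShift, col_apply, of_apply, Pi.single_apply, Fin.ext_iff, Fin.val_add_one,
    Fin.val_last, Nat.add_sub_cancel, Pi.smul_apply, smul_eq_mul]
  split_ifs <;> first | omega | simp

end

theorem stmt_11_general (n : ℕ)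
    (H : Type*) [AddCommGroup H] (t : AddAut H)
    (χ : H → ℂˣ) (hχ : ∀ a b : H, χ (a + b) = χ a * χ b)
    (hdist : ∀ i j : ℕ, i < n → j < n → i ≠ j → ∃ h : H, χ ((i • t) h) ≠ χ ((j • t) h))
    (z : ℂˣ)
    (U : GL (Fin n) ℂ)
    (hU : (U : Matrix (Fin n) (Fin n) ℂ) = Matrix.of fun i j : Fin n =>
      if (i : ℕ) = (j : ℕ) + 1 then 1
      else if (i : ℕ) = 0 ∧ (j : ℕ) = n - 1 then (z : ℂ)
      else 0)
    (D : H → GL (Fin n) ℂ)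
    (hD : ∀ h : H, (D h : Matrix (Fin n) (Fin n) ℂ)
      = Matrix.diagonal fun i : Fin n => (χ (((i : ℕ) • t) h) : ℂ)) :
    ∀ V : Submodule ℂ (Fin n → ℂ),
      (∀ (j : ℤ) (h : H), ∀ v ∈ V,
        ((U ^ j * D h : GL (Fin n) ℂ) : Matrix (Fin n) (Fin n) ℂ).mulVec v ∈ V) →
      V = ⊥ ∨ V = ⊤ := by
  intro V hV
  have hχ0 : χ 0 = 1 := by simpa using hχ 0 0
  have hD0 : D 0 = 1 := Units.ext (by simp [hD, hχ0])
  have hsep : ∀ i j : Fin n, i ≠ j → ∃ h, (χ (((i : ℕ) • t) h) : ℂ) ≠ χ (((j : ℕ) • t) h) :=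
    fun i j hij ↦ (hdist i j i.isLt j.isLt (Fin.val_injective.ne hij)).imp
      fun _ ↦ Units.val_injective.ne
  have hT : ∀ i, ∃ c : ℂ, c ≠ 0 ∧
      twistedShift n (z : ℂ) *ᵥ Pi.single i 1 = c • Pi.single (finRotate n i) 1 :=
    fun i ↦ ⟨_, by split_ifs <;> simp, twistedShift_mulVec_single (z : ℂ) i⟩
  exact Submodule.eq_bot_or_eq_top_of_diagonal_of_monomial_invariant hsep hT
    exists_finRotate_iterate_eq (fun h v hv ↦ by simpa [hD] using hV 0 h v hv)
    (fun v hv ↦ by simpa [hD0, hU, twistedShift] using hV 1 0 v hv)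

/-- If the characters χ, t·χ, …, t^{n−1}·χ are pairwise distinct, then
α_{(z,χ)} is irreducible: the only invariant subspaces of ℂⁿ are 0 and ℂⁿ. -/
theorem stmt_11 (n : ℕ) (hn : 0 < n)
    (H : Type*) [AddCommGroup H] (t : AddAut H)
    (χ : H → ℂˣ) (hχ : ∀ a b : H, χ (a + b) = χ a * χ b)
    (hper : ∀ h : H, χ ((n • t) h) = χ h)
    (hdist : ∀ i j : ℕ, i < n → j < n → i ≠ j → ∃ h : H, χ ((i • t) h) ≠ χ ((j • t) h))
    (z : ℂˣ)
    (U : GL (Fin n) ℂ)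
    (hU : (U : Matrix (Fin n) (Fin n) ℂ) = Matrix.of fun i j : Fin n =>
      if (i : ℕ) = (j : ℕ) + 1 then 1
      else if (i : ℕ) = 0 ∧ (j : ℕ) = n - 1 then (z : ℂ)
      else 0)
    (D : H → GL (Fin n) ℂ)
    (hD : ∀ h : H, (D h : Matrix (Fin n) (Fin n) ℂ)
      = Matrix.diagonal fun i : Fin n => (χ (((i : ℕ) • t) h) : ℂ)) :
    ∀ V : Submodule ℂ (Fin n → ℂ),
      (∀ (j : ℤ) (h : H), ∀ v ∈ V,
        ((U ^ j * D h : GL (Fin n) ℂ) : Matrix (Fin n) (Fin n) ℂ).mulVec v ∈ V) →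
      V = ⊥ ∨ V = ⊤ :=
  stmt_11_general n H t χ hχ hdist z U hU D hD
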